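/- arXiv:2012.08219 — 3 statements merged into one kernel-verified Lean document; each statement's English description precedes it below -/
import Mathlib

section
/- Let v¹, v³ : [0,L] → ℂ be C² and v², v⁴, v⁵, v⁶ : [0,L] → ℂ be C¹, all six vanishing at x = 0 and x = L, and suppose S := k₃(∂ₓv⁵ − l·v¹) + d·(∂ₓv⁶ − l·v²) extends to a C¹ function on [0,L]. Then Re ∫₀^L [ k₁(∂ₓv² + v⁴ + l·v⁶)·conj(∂ₓv¹ + v³ + l·v⁵) + ( k₁·∂ₓ(∂ₓv¹ + v³ + l·v⁵) + l·k₃(∂ₓv⁵ − l·v¹) + l·d(x)(∂ₓv⁶ − l·v²) )·conj(v²) + k₂·∂ₓv⁴·conj(∂ₓv³) + ( k₂·∂ₓ²v³ − k₁(∂ₓv¹ + v³ + l·v⁵) )·conj(v⁴) + k₃(∂ₓv⁶ − l·v²)·conj(∂ₓv⁵ − l·v¹) + ( ∂ₓS − l·k₁(∂ₓv¹ + v³ + l·v⁵) )·conj(v⁶) ] dx = −d₀ ∫_α^β |∂ₓv⁶ − l·v²|² dx. (This is the dissipativity identity Re(𝒜U,U)_ℋ = −∫₀^L d(x)|v⁶_x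 − l v²|² dx for the Bresse generator 𝒜.) -/
/-!
Since `Re (z * conj w) = Re (w * conj z)`, the real part of the integrand is
`Re ∂ₓ(k₁ v² conj P + k₂ v⁴ conj ∂ₓv³ + S conj v⁶) - d |R|²`, where `P = ∂ₓv¹ + v³ + l v⁵` and
`R = ∂ₓv⁶ - l v²`: the terms coupling `P` with `v⁴` and `v⁶`, and `R` with `∂ₓv⁵ - l v¹`, cancel
in pairs, and writing `S conj ∂ₓv⁶ = S conj (R + l v²)` with `S = k₃ (∂ₓv⁵ - l v¹) + d R` leaves
exactly `d |R|²` over. The flux vanishes at `0` and `L` because `v², v⁴, v⁶` do, so its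
derivative integrates to zero.
-/

open MeasureTheory Set intervalIntegral ComplexConjugate

@[fun_prop]
theorem Complex.contDiff_conj {n : WithTop ℕ∞} : ContDiff ℝ n (conj : ℂ → ℂ) :=
  Complex.conjCLE.contDiff

theorem deriv_eq_derivWithin_Icc_of_eqOn {E : Type*} [NormedAddCommGroup E] [NormedSpace ℝ E]
    {f g : ℝ → E} {a b x : ℝ} (hfg : EqOn f g (Ioo a b)) (hx : x ∈ Ioo a b) :
    deriv f x = derivWithin g (Icc a b) x := by
  rw [derivWithin_of_mem_nhds (Icc_mem_nhds hx.1 hx.2)]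
  exact (Filter.eventuallyEq_of_mem (Ioo_mem_nhds hx.1 hx.2) hfg).deriv_eq

theorem eqOn_deriv_derivWithin_Icc {E : Type*} [NormedAddCommGroup E] [NormedSpace ℝ E]
    (f : ℝ → E) (a b : ℝ) : EqOn (deriv f) (derivWithin f (Icc a b)) (Ioo a b) :=
  fun _ => deriv_eq_derivWithin_Icc_of_eqOn (eqOn_refl f _)

theorem intervalIntegral.integral_indicator_Ioo {E : Type*} [NormedAddCommGroup E]
    [NormedSpace ℝ E] {f : ℝ → E} {a b α β : ℝ} (hα : a ≤ α) (hαβ : α ≤ β) (hβ : β ≤ b) :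
    ∫ x in a..b, (Ioo α β).indicator f x = ∫ x in α..β, f x := by
  rw [integral_of_le (hα.trans (hαβ.trans hβ)), integral_of_le hαβ,
    setIntegral_indicator measurableSet_Ioo,
    inter_eq_self_of_subset_right (Ioo_subset_Ioc_self.trans (Ioc_subset_Ioc hα hβ)),
    integral_Ioc_eq_integral_Ioo]

theorem IntervalIntegrable.indicator {E : Type*} [NormedAddCommGroup E] {f : ℝ → E}
    {μ : Measure ℝ} {a b : ℝ} {s : Set ℝ} (hf : IntervalIntegrable f μ a b)
    (hs : MeasurableSet s) : IntervalIntegrable (s.indicator f) μ a b :=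
  ⟨hf.1.indicator hs, hf.2.indicator hs⟩

theorem intervalIntegral.re_integral {f : ℝ → ℂ} {μ : Measure ℝ} {a b : ℝ}
    (hf : IntervalIntegrable f μ a b) :
    (∫ x in a..b, f x ∂μ).re = ∫ x in a..b, (f x).re ∂μ :=
  (intervalIntegral_re hf).symm

theorem intervalIntegral.integral_ite_Ioo_mul {d : ℝ → ℝ} {a b α β d₀ : ℝ}
    (hd : ∀ x, d x = if α < x ∧ x < β then d₀ else 0) (hα : a ≤ α) (hαβ : α ≤ β) (hβ : β ≤ b)
    (g : ℝ → ℝ) : ∫ x in a..b, d x * g x = d₀ * ∫ x in α..β, g x := by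
  rw [← integral_const_mul, ← integral_indicator_Ioo hα hαβ hβ]
  congr 1
  ext x
  simp only [hd, indicator_apply, mem_Ioo, ite_mul, zero_mul]

/-- `D` plays the role of `∂ₓ`: the theorem's integrand is `bresseIntegrand deriv`, which is junk
at the endpoints, while `bresseIntegrand (derivWithin · (Icc a b))` agrees with it on `(a, b)` and
only involves derivatives that are continuous up to the boundary. -/
noncomputable def bresseIntegrand (D : (ℝ → ℂ) → ℝ → ℂ) (k₁ k₂ k₃ l : ℝ) (d : ℝ → ℝ)
    (v1 v2 v3 v4 v5 v6 S : ℝ → ℂ) (x : ℝ) : ℂ :=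
  (k₁ : ℂ) * (D v2 x + v4 x + (l : ℂ) * v6 x) * conj (D v1 x + v3 x + (l : ℂ) * v5 x)
    + ((k₁ : ℂ) * D (fun y => D v1 y + v3 y + (l : ℂ) * v5 y) x
        + (l : ℂ) * (k₃ : ℂ) * (D v5 x - (l : ℂ) * v1 x)
        + (l : ℂ) * (d x : ℂ) * (D v6 x - (l : ℂ) * v2 x)) * conj (v2 x)
    + (k₂ : ℂ) * D v4 x * conj (D v3 x)
    + ((k₂ : ℂ) * D (D v3) x - (k₁ : ℂ) * (D v1 x + v3 x + (l : ℂ) * v5 x)) * conj (v4 x)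
    + (k₃ : ℂ) * (D v6 x - (l : ℂ) * v2 x) * conj (D v5 x - (l : ℂ) * v1 x)
    + (D S x - (l : ℂ) * (k₁ : ℂ) * (D v1 x + v3 x + (l : ℂ) * v5 x)) * conj (v6 x)

noncomputable def bresseFlux (D : (ℝ → ℂ) → ℝ → ℂ) (k₁ k₂ l : ℝ)
    (v1 v2 v3 v4 v5 v6 S : ℝ → ℂ) (x : ℝ) : ℂ :=
  (k₁ : ℂ) * v2 x * conj (D v1 x + v3 x + (l : ℂ) * v5 x) + (k₂ : ℂ) * v4 x * conj (D v3 x)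
    + S x * conj (v6 x)

structure BresseRegular (a b : ℝ) (v1 v2 v3 v4 v5 v6 S : ℝ → ℂ) : Prop where
  contDiffOn₁ : ContDiffOn ℝ 2 v1 (Icc a b)
  contDiffOn₂ : ContDiffOn ℝ 1 v2 (Icc a b)
  contDiffOn₃ : ContDiffOn ℝ 2 v3 (Icc a b)
  contDiffOn₄ : ContDiffOn ℝ 1 v4 (Icc a b)
  contDiffOn₅ : ContDiffOn ℝ 1 v5 (Icc a b)
  contDiffOn₆ : ContDiffOn ℝ 1 v6 (Icc a b)
  contDiffOn_S : ContDiffOn ℝ 1 S (Icc a b)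

section Bresse

variable {k₁ k₂ k₃ l a b x : ℝ} {d : ℝ → ℝ} {v1 v2 v3 v4 v5 v6 S : ℝ → ℂ}

theorem bresseIntegrand_eqOn_derivWithin :
    EqOn (bresseIntegrand deriv k₁ k₂ k₃ l d v1 v2 v3 v4 v5 v6 S)
      (bresseIntegrand (derivWithin · (Icc a b)) k₁ k₂ k₃ l d v1 v2 v3 v4 v5 v6 S)
      (Ioo a b) := by
  have hD (f : ℝ → ℂ) := eqOn_deriv_derivWithin_Icc f a b
  intro x hx
  have hP : EqOn (fun y => deriv v1 y + v3 y + (l : ℂ) * v5 y)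
      (fun y => derivWithin v1 (Icc a b) y + v3 y + (l : ℂ) * v5 y) (Ioo a b) :=
    fun y hy => by simp only [hD v1 hy]
  rw [bresseIntegrand, bresseIntegrand, deriv_eq_derivWithin_Icc_of_eqOn (hD v3) hx,
    deriv_eq_derivWithin_Icc_of_eqOn hP hx]
  simp only [hD _ hx]

/-- With `v¹, v³, v⁵` the vertical, rotational and longitudinal displacements of the beam, this is
the shear strain `φₓ + ψ + l w`. -/
theorem BresseRegular.contDiffOn_shear (hab : a < b) (h : BresseRegular a b v1 v2 v3 v4 v5 v6 S)
    (l : ℝ) :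
    ContDiffOn ℝ 1 (fun y => derivWithin v1 (Icc a b) y + v3 y + (l : ℂ) * v5 y) (Icc a b) := by
  have := h.contDiffOn₁.derivWithin (m := 1) (uniqueDiffOn_Icc hab) (by norm_num)
  have := h.contDiffOn₃.of_le one_le_two
  have := h.contDiffOn₅
  fun_prop

theorem BresseRegular.contDiffOn_bending (hab : a < b)
    (h : BresseRegular a b v1 v2 v3 v4 v5 v6 S) :
    ContDiffOn ℝ 1 (derivWithin v3 (Icc a b)) (Icc a b) :=
  h.contDiffOn₃.derivWithin (uniqueDiffOn_Icc hab) (by norm_num)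

theorem contDiffOn_bresseFlux (hab : a < b) (h : BresseRegular a b v1 v2 v3 v4 v5 v6 S) :
    ContDiffOn ℝ 1 (bresseFlux (derivWithin · (Icc a b)) k₁ k₂ l v1 v2 v3 v4 v5 v6 S)
      (Icc a b) := by
  have := h.contDiffOn_shear hab l
  have := h.contDiffOn_bending hab
  have := h.contDiffOn₂
  have := h.contDiffOn₄
  have := h.contDiffOn₆
  have := h.contDiffOn_S
  unfold bresseFlux
  fun_prop

theorem re_bresseIntegrand_eq (hab : a < b) (h : BresseRegular a b v1 v2 v3 v4 v5 v6 S)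
    (hx : x ∈ Icc a b)
    (hS : S x = k₃ * (derivWithin v5 (Icc a b) x - l * v1 x)
      + d x * (derivWithin v6 (Icc a b) x - l * v2 x)) :
    (bresseIntegrand (derivWithin · (Icc a b)) k₁ k₂ k₃ l d v1 v2 v3 v4 v5 v6 S x).re
      = (derivWithin (bresseFlux (derivWithin · (Icc a b)) k₁ k₂ l v1 v2 v3 v4 v5 v6 S)
          (Icc a b) x).re
        - d x * ‖derivWithin v6 (Icc a b) x - l * v2 x‖ ^ 2 := by
  have hD : ∀ f : ℝ → ℂ, ContDiffOn ℝ 1 f (Icc a b) →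
      HasDerivWithinAt f (derivWithin f (Icc a b) x) (Icc a b) x :=
    fun f hf => (hf.differentiableOn one_ne_zero x hx).hasDerivWithinAt
  have hflux : HasDerivWithinAt
      (bresseFlux (derivWithin · (Icc a b)) k₁ k₂ l v1 v2 v3 v4 v5 v6 S) _ (Icc a b) x :=
    ((((hD _ h.contDiffOn₂).const_mul (k₁ : ℂ)).mul
      (hD _ (h.contDiffOn_shear hab l)).star).add
    (((hD _ h.contDiffOn₄).const_mul (k₂ : ℂ)).mul (hD _ (h.contDiffOn_bending hab)).star)).add
    ((hD _ h.contDiffOn_S).mul (hD _ h.contDiffOn₆).star)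
  rw [hflux.derivWithin (uniqueDiffOn_Icc hab x hx), bresseIntegrand]
  simp only [Complex.star_def]
  rw [hS, Complex.sq_norm]
  simp only [Complex.add_re, Complex.sub_re, Complex.mul_re, Complex.add_im, Complex.sub_im,
    Complex.mul_im, Complex.conj_re, Complex.conj_im, Complex.ofReal_re, Complex.ofReal_im,
    Complex.normSq_apply]
  ring

theorem intervalIntegrable_bresseIntegrand (hab : a < b)
    (h : BresseRegular a b v1 v2 v3 v4 v5 v6 S) (hd : IntervalIntegrable d volume a b) :
    IntervalIntegrable
      (bresseIntegrand (derivWithin · (Icc a b)) k₁ k₂ k₃ l d v1 v2 v3 v4 v5 v6 S) volume a b := by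
  have hu := uniqueDiffOn_Icc hab
  have := (h.contDiffOn₁.derivWithin (m := 1) hu (by norm_num)).continuousOn
  have := h.contDiffOn₂.continuousOn_derivWithin hu le_rfl
  have := (h.contDiffOn_bending hab).continuousOn
  have := h.contDiffOn₄.continuousOn_derivWithin hu le_rfl
  have := h.contDiffOn₅.continuousOn_derivWithin hu le_rfl
  have := h.contDiffOn₆.continuousOn_derivWithin hu le_rfl
  have := h.contDiffOn_S.continuousOn_derivWithin hu le_rfl
  have := (h.contDiffOn_shear hab l).continuousOn_derivWithin hu le_rfl
  have := (h.contDiffOn_bending hab).continuousOn_derivWithin hu le_rfl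
  have := h.contDiffOn₁.continuousOn
  have := h.contDiffOn₂.continuousOn
  have := h.contDiffOn₃.continuousOn
  have := h.contDiffOn₄.continuousOn
  have := h.contDiffOn₅.continuousOn
  have := h.contDiffOn₆.continuousOn
  have := h.contDiffOn_S.continuousOn
  have hsplit : bresseIntegrand (derivWithin · (Icc a b)) k₁ k₂ k₃ l d v1 v2 v3 v4 v5 v6 S
      = fun x => bresseIntegrand (derivWithin · (Icc a b)) k₁ k₂ k₃ l 0 v1 v2 v3 v4 v5 v6 S x
        + d x • ((l : ℂ) * (derivWithin v6 (Icc a b) x - l * v2 x) * conj (v2 x)) := by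
    ext x
    simp only [bresseIntegrand, Pi.zero_apply, Complex.ofReal_zero, Complex.real_smul]
    ring
  rw [hsplit]
  refine IntervalIntegrable.add ?_ (hd.smul_continuousOn ?_)
  · refine ContinuousOn.intervalIntegrable_of_Icc hab.le ?_
    unfold bresseIntegrand
    fun_prop
  · rw [uIcc_of_le hab.le]
    fun_prop

theorem integral_re_bresseIntegrand (hab : a < b) (h : BresseRegular a b v1 v2 v3 v4 v5 v6 S)
    (hd : IntervalIntegrable d volume a b)
    (hS : ∀ x ∈ Ioo a b, S x = k₃ * (derivWithin v5 (Icc a b) x - l * v1 x)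
      + d x * (derivWithin v6 (Icc a b) x - l * v2 x))
    (ha : v2 a = 0 ∧ v4 a = 0 ∧ v6 a = 0) (hb : v2 b = 0 ∧ v4 b = 0 ∧ v6 b = 0) :
    ∫ x in a..b, (bresseIntegrand (derivWithin · (Icc a b)) k₁ k₂ k₃ l d v1 v2 v3 v4 v5 v6 S x).re
      = -∫ x in a..b, d x * ‖derivWithin v6 (Icc a b) x - l * v2 x‖ ^ 2 := by
  set G := bresseFlux (derivWithin · (Icc a b)) k₁ k₂ l v1 v2 v3 v4 v5 v6 S
  have hG : ContDiffOn ℝ 1 G (Icc a b) := contDiffOn_bresseFlux hab h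
  have hG' := hG.continuousOn_derivWithin (uniqueDiffOn_Icc hab) le_rfl
  have hG're : IntervalIntegrable (fun x => (derivWithin G (Icc a b) x).re) volume a b :=
    (Complex.continuous_re.comp_continuousOn hG').intervalIntegrable_of_Icc hab.le
  have hFTC : ∫ x in a..b, (derivWithin G (Icc a b) x).re = 0 := by
    rw [← re_integral (hG'.intervalIntegrable_of_Icc hab.le),
      integral_derivWithin_Icc_of_contDiffOn_Icc hG hab.le]
    simp [G, bresseFlux, ha, hb]
  have hdiss : IntervalIntegrable (fun x => d x * ‖derivWithin v6 (Icc a b) x - l * v2 x‖ ^ 2)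
      volume a b := by
    have := h.contDiffOn₂.continuousOn
    have := h.contDiffOn₆.continuousOn_derivWithin (uniqueDiffOn_Icc hab) le_rfl
    refine hd.mul_continuousOn ?_
    rw [uIcc_of_le hab.le]
    fun_prop
  rw [integral_congr_Ioo_of_le hab.le
      fun x hx => re_bresseIntegrand_eq hab h (Ioo_subset_Icc_self hx) (hS x hx),
    integral_sub hG're hdiss, hFTC, zero_sub]

end Bresse

theorem bresse_dissipativity_identity_general
    (k₁ k₂ k₃ l L d₀ α β : ℝ)
    (hL : 0 < L)
    (hα : 0 < α) (hαβ : α < β) (hβL : β < L)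
    (d : ℝ → ℝ) (hd : ∀ x, d x = if α < x ∧ x < β then d₀ else 0)
    (v1 v2 v3 v4 v5 v6 : ℝ → ℂ)
    (hv1 : ContDiffOn ℝ 2 v1 (Set.Icc 0 L)) (hv3 : ContDiffOn ℝ 2 v3 (Set.Icc 0 L))
    (hv2 : ContDiffOn ℝ 1 v2 (Set.Icc 0 L)) (hv4 : ContDiffOn ℝ 1 v4 (Set.Icc 0 L))
    (hv5 : ContDiffOn ℝ 1 v5 (Set.Icc 0 L)) (hv6 : ContDiffOn ℝ 1 v6 (Set.Icc 0 L))
    (hbc : v1 0 = 0 ∧ v1 L = 0 ∧ v2 0 = 0 ∧ v2 L = 0 ∧ v3 0 = 0 ∧ v3 L = 0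
      ∧ v4 0 = 0 ∧ v4 L = 0 ∧ v5 0 = 0 ∧ v5 L = 0 ∧ v6 0 = 0 ∧ v6 L = 0)
    (S : ℝ → ℂ) (hS : ContDiffOn ℝ 1 S (Set.Icc 0 L))
    (hSdef : ∀ x ∈ Set.Icc (0:ℝ) L,
      S x = (k₃ : ℂ) * (deriv v5 x - (l : ℂ) * v1 x)
        + (d x : ℂ) * (deriv v6 x - (l : ℂ) * v2 x)) :
    (∫ x in (0:ℝ)..L,
      ((k₁ : ℂ) * (deriv v2 x + v4 x + (l : ℂ) * v6 x)
          * (starRingEnd ℂ) (deriv v1 x + v3 x + (l : ℂ) * v5 x)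
        + ((k₁ : ℂ) * deriv (fun y => deriv v1 y + v3 y + (l : ℂ) * v5 y) x
            + (l : ℂ) * (k₃ : ℂ) * (deriv v5 x - (l : ℂ) * v1 x)
            + (l : ℂ) * (d x : ℂ) * (deriv v6 x - (l : ℂ) * v2 x))
          * (starRingEnd ℂ) (v2 x)
        + (k₂ : ℂ) * deriv v4 x * (starRingEnd ℂ) (deriv v3 x)
        + ((k₂ : ℂ) * deriv (deriv v3) x
            - (k₁ : ℂ) * (deriv v1 x + v3 x + (l : ℂ) * v5 x)) * (starRingEnd ℂ) (v4 x)
        + (k₃ : ℂ) * (deriv v6 x - (l : ℂ) * v2 x)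
          * (starRingEnd ℂ) (deriv v5 x - (l : ℂ) * v1 x)
        + (deriv S x - (l : ℂ) * (k₁ : ℂ) * (deriv v1 x + v3 x + (l : ℂ) * v5 x))
          * (starRingEnd ℂ) (v6 x))).re
    = -d₀ * ∫ x in α..β, ‖deriv v6 x - (l : ℂ) * v2 x‖ ^ 2 := by
  obtain ⟨-, -, h20, h2L, -, -, h40, h4L, -, -, h60, h6L⟩ := hbc
  have hreg : BresseRegular 0 L v1 v2 v3 v4 v5 v6 S := ⟨hv1, hv2, hv3, hv4, hv5, hv6, hS⟩
  have hD (f : ℝ → ℂ) := eqOn_deriv_derivWithin_Icc f 0 L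
  have hd_ind : d = (Ioo α β).indicator fun _ => d₀ := by
    ext x
    simp [hd, indicator_apply, mem_Ioo]
  have hd_int : IntervalIntegrable d volume 0 L := by
    rw [hd_ind]
    exact intervalIntegrable_const.indicator measurableSet_Ioo
  have hS' : ∀ x ∈ Ioo 0 L, S x = k₃ * (derivWithin v5 (Icc 0 L) x - l * v1 x)
      + d x * (derivWithin v6 (Icc 0 L) x - l * v2 x) := fun x hx => by
    rw [hSdef x (Ioo_subset_Icc_self hx), hD v5 hx, hD v6 hx]
  have hαβL : Ioo α β ⊆ Ioo 0 L := Ioo_subset_Ioo hα.le hβL.le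
  change (∫ x in (0:ℝ)..L, bresseIntegrand deriv k₁ k₂ k₃ l d v1 v2 v3 v4 v5 v6 S x).re = _
  rw [integral_congr_Ioo_of_le hL.le bresseIntegrand_eqOn_derivWithin,
    re_integral (intervalIntegrable_bresseIntegrand hL hreg hd_int),
    integral_re_bresseIntegrand hL hreg hd_int hS' ⟨h20, h40, h60⟩ ⟨h2L, h4L, h6L⟩,
    integral_ite_Ioo_mul hd hα.le hαβ.le hβL.le, neg_mul,
    integral_congr_Ioo_of_le hαβ.le fun x hx => by rw [← hD v6 (hαβL hx)]]

theorem bresse_dissipativity_identity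
    (ρ₁ ρ₂ k₁ k₂ k₃ l L d₀ α β : ℝ)
    (hρ₁ : 0 < ρ₁) (hρ₂ : 0 < ρ₂) (hk₁ : 0 < k₁) (hk₂ : 0 < k₂) (hk₃ : 0 < k₃)
    (hl : 0 < l) (hL : 0 < L) (hd₀ : 0 < d₀)
    (hα : 0 < α) (hαβ : α < β) (hβL : β < L)
    (d : ℝ → ℝ) (hd : ∀ x, d x = if α < x ∧ x < β then d₀ else 0)
    (v1 v2 v3 v4 v5 v6 : ℝ → ℂ)
    (hv1 : ContDiffOn ℝ 2 v1 (Set.Icc 0 L)) (hv3 : ContDiffOn ℝ 2 v3 (Set.Icc 0 L))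
    (hv2 : ContDiffOn ℝ 1 v2 (Set.Icc 0 L)) (hv4 : ContDiffOn ℝ 1 v4 (Set.Icc 0 L))
    (hv5 : ContDiffOn ℝ 1 v5 (Set.Icc 0 L)) (hv6 : ContDiffOn ℝ 1 v6 (Set.Icc 0 L))
    (hbc : v1 0 = 0 ∧ v1 L = 0 ∧ v2 0 = 0 ∧ v2 L = 0 ∧ v3 0 = 0 ∧ v3 L = 0
      ∧ v4 0 = 0 ∧ v4 L = 0 ∧ v5 0 = 0 ∧ v5 L = 0 ∧ v6 0 = 0 ∧ v6 L = 0)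
    (S : ℝ → ℂ) (hS : ContDiffOn ℝ 1 S (Set.Icc 0 L))
    (hSdef : ∀ x ∈ Set.Icc (0:ℝ) L,
      S x = (k₃ : ℂ) * (deriv v5 x - (l : ℂ) * v1 x)
        + (d x : ℂ) * (deriv v6 x - (l : ℂ) * v2 x)) :
    (∫ x in (0:ℝ)..L,
      ((k₁ : ℂ) * (deriv v2 x + v4 x + (l : ℂ) * v6 x)
          * (starRingEnd ℂ) (deriv v1 x + v3 x + (l : ℂ) * v5 x)
        + ((k₁ : ℂ) * deriv (fun y => deriv v1 y + v3 y + (l : ℂ) * v5 y) x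
            + (l : ℂ) * (k₃ : ℂ) * (deriv v5 x - (l : ℂ) * v1 x)
            + (l : ℂ) * (d x : ℂ) * (deriv v6 x - (l : ℂ) * v2 x))
          * (starRingEnd ℂ) (v2 x)
        + (k₂ : ℂ) * deriv v4 x * (starRingEnd ℂ) (deriv v3 x)
        + ((k₂ : ℂ) * deriv (deriv v3) x
            - (k₁ : ℂ) * (deriv v1 x + v3 x + (l : ℂ) * v5 x)) * (starRingEnd ℂ) (v4 x)
        + (k₃ : ℂ) * (deriv v6 x - (l : ℂ) * v2 x)
          * (starRingEnd ℂ) (deriv v5 x - (l : ℂ) * v1 x)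
        + (deriv S x - (l : ℂ) * (k₁ : ℂ) * (deriv v1 x + v3 x + (l : ℂ) * v5 x))
          * (starRingEnd ℂ) (v6 x))).re
    = -d₀ * ∫ x in α..β, ‖deriv v6 x - (l : ℂ) * v2 x‖ ^ 2 :=
  bresse_dissipativity_identity_general k₁ k₂ k₃ l L d₀ α β hL hα hαβ hβL d hd v1 v2 v3 v4 v5 v6 hv1
    hv3 hv2 hv4 hv5 hv6 hbc S hS hSdef
end

section
/- Let λ ∈ ℝ. Suppose v¹, v³ : [0,L] → ℂ are C², v², v⁴, v⁵, v⁶ : [0,L] → ℂ are C¹, all six vanish at x = 0 and x = L, the function S := k₃(∂ₓv⁵ − l·v¹) + d·(∂ₓv⁶ − l·v²) extends to a C¹ function on [0,L], and on (0,L) the eigenvalue equations hold: v² = iλv¹, v⁴ = iλv³, v⁶ = iλv⁵, k₁·∂ₓ(∂ₓv¹ + v³ + l·v⁵) + l·k₃(∂ₓv⁵ − l·v¹) + l·d(x)(∂ₓv⁶ − l·v²) = iλρ₁v², k₂·∂ₓ²v³ − k₁(∂ₓv¹ + v³ + l·v⁵) = iλρ₂v⁴, and ∂ₓS − l·k₁(∂ₓv¹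 + v³ + l·v⁵) = iλρ₁v⁶. Then v¹ = v² = v³ = v⁴ = v⁵ = v⁶ = 0 identically on [0,L]. (This is the injectivity of iλI − 𝒜, i.e., ker(iλI − 𝒜) = {0} for every real λ.) -/
/-!
Multiplying the equations for `v₁, v₃, v₅` by their conjugates and integrating by parts (the
boundary terms vanish) gives an energy identity whose imaginary part is
`λ ∫ d |∂ₓv₅ - l v₁|² = 0`. Write `T = ∂ₓv₁ + v₃ + l v₅` and `ψ = ∂ₓv₅ - l v₁`.

If `λ ≠ 0`, then `ψ = 0` on the damping region `(α, β)`; there `S = 0`, hence `l k₁ T = λ² ρ₁ v₅`,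
and differentiating this once more forces `v₁ = 0` and makes every component of the state
`(v₁, T, v₃, ∂ₓv₃, v₅, S)` stationary. If `λ = 0`, the real part of the identity is
`∫ k₁ |T|² + k₂ |∂ₓv₃|² + k₃ |ψ|² = 0`, so the state vanishes at `x = 0`.

Either way `λ d ψ = 0` on `(0, L)`, so `S = k₃ ψ` and the state solves a linear ODE with constant
coefficients that passes through an equilibrium. By uniqueness it is constant, and since
`v₁, v₃, v₅` vanish at `0`, they vanish identically.
-/
open Set Filter Topology MeasureTheory ComplexConjugate Matrix

section Calculus

variable {E : Type*} [NormedAddCommGroup E] [NormedSpace ℝ E]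

theorem IsOpen.eqOn_zero_of_hasDerivAt_of_eqOn_zero {s : Set ℝ} (hs : IsOpen s) {f f' : ℝ → E}
    (hf : ∀ x ∈ s, HasDerivAt f (f' x) x) (h : EqOn f 0 s) : EqOn f' 0 s := fun x hx =>
  (hf x hx).unique <| (hasDerivAt_const x 0).congr_of_eventuallyEq <|
    eventually_of_mem (hs.mem_nhds hx) h

theorem hasDerivWithinAt_Ici_of_hasDerivAt_Ioo {F : E → E} (hF : Continuous F) {u : ℝ → E}
    {a b : ℝ} (hab : a < b) (hu : ContinuousOn u (Icc a b))
    (hu' : ∀ x ∈ Ioo a b, HasDerivAt u (F (u x)) x) : HasDerivWithinAt u (F (u a)) (Ici a) a := by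
  have hlim : Tendsto u (𝓝[>] a) (𝓝 (u a)) :=
    (hu a (left_mem_Icc.2 hab.le)).mono_of_mem_nhdsWithin (Icc_mem_nhdsGT hab)
  refine hasDerivWithinAt_Ici_of_tendsto_deriv (s := Ioo a b)
    (fun x hx => (hu' x hx).differentiableAt.differentiableWithinAt)
    (hlim.mono_left (nhdsWithin_mono _ Ioo_subset_Ioi_self)) (Ioo_mem_nhdsGT hab) ?_
  refine ((hF.tendsto _).comp hlim).congr' ?_
  filter_upwards [Ioo_mem_nhdsGT hab] with x hx using ((hu' x hx).deriv).symm

theorem hasDerivWithinAt_Iic_of_hasDerivAt_Ioo {F : E → E} (hF : Continuous F) {u : ℝ → E}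
    {a b : ℝ} (hab : a < b) (hu : ContinuousOn u (Icc a b))
    (hu' : ∀ x ∈ Ioo a b, HasDerivAt u (F (u x)) x) : HasDerivWithinAt u (F (u b)) (Iic b) b := by
  have hlim : Tendsto u (𝓝[<] b) (𝓝 (u b)) :=
    (hu b (right_mem_Icc.2 hab.le)).mono_of_mem_nhdsWithin (Icc_mem_nhdsLT hab)
  refine hasDerivWithinAt_Iic_of_tendsto_deriv (s := Ioo a b)
    (fun x hx => (hu' x hx).differentiableAt.differentiableWithinAt)
    (hlim.mono_left (nhdsWithin_mono _ Ioo_subset_Iio_self)) (Ioo_mem_nhdsLT hab) ?_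
  refine ((hF.tendsto _).comp hlim).congr' ?_
  filter_upwards [Ioo_mem_nhdsLT hab] with x hx using ((hu' x hx).deriv).symm

theorem derivWithin_Icc_eventuallyEq_deriv {f : ℝ → E} {a b x : ℝ} (hx : x ∈ Ioo a b) :
    derivWithin f (Icc a b) =ᶠ[𝓝 x] deriv f := by
  filter_upwards [Ioo_mem_nhds hx.1 hx.2] with y hy
  exact derivWithin_of_mem_nhds (Icc_mem_nhds hy.1 hy.2)

theorem ContDiffOn.hasDerivAt_deriv_of_eventuallyEq {f g : ℝ → E} {n : WithTop ℕ∞} {a b x : ℝ}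
    (hf : ContDiffOn ℝ n f (Icc a b)) (hn : n ≠ 0) (hx : x ∈ Ioo a b) (hfg : f =ᶠ[𝓝 x] g) :
    HasDerivAt f (deriv g x) x :=
  hfg.deriv_eq ▸ ((hf.differentiableOn hn x (Ioo_subset_Icc_self hx)).differentiableAt
    (Icc_mem_nhds hx.1 hx.2)).hasDerivAt

theorem ContDiffOn.hasDerivAt_derivWithin_Icc {f : ℝ → E} {n : WithTop ℕ∞} {a b x : ℝ}
    (hf : ContDiffOn ℝ n f (Icc a b)) (hn : n ≠ 0) (hx : x ∈ Ioo a b) :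
    HasDerivAt f (derivWithin f (Icc a b) x) x := by
  simpa only [(derivWithin_Icc_eventuallyEq_deriv (f := f) hx).self_of_nhds] using
    hf.hasDerivAt_deriv_of_eventuallyEq hn hx .rfl

/-- The uniqueness theorems need one-sided derivatives at the initial time `x₀`, which may be an
endpoint of the interval. -/
theorem LipschitzWith.eqOn_const_of_hasDerivAt {F : E → E} {K : NNReal} (hF : LipschitzWith K F)
    {u : ℝ → E} {a b x₀ : ℝ} (hu : ContinuousOn u (Icc a b))
    (hu' : ∀ x ∈ Ioo a b, HasDerivAt u (F (u x)) x) (hx₀ : x₀ ∈ Icc a b) (hF₀ : F (u x₀) = 0) :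
    EqOn u (fun _ => u x₀) (Icc a b) := by
  have hconst (t : ℝ) (s : Set ℝ) : HasDerivWithinAt (fun _ => u x₀) (F (u x₀)) s t := by
    rw [hF₀]; exact hasDerivWithinAt_const _ _ _
  rw [← Icc_union_Icc_eq_Icc hx₀.1 hx₀.2]
  refine EqOn.union ?_ ?_
  · refine ODE_solution_unique_of_mem_Icc_left (v := fun _ => F) (s := fun _ => univ)
      (fun _ _ => hF.lipschitzOnWith) (hu.mono (Icc_subset_Icc_right hx₀.2)) ?_
      (fun _ _ => trivial) continuousOn_const (fun t _ => hconst t _) (fun _ _ => trivial) rfl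
    intro t ht
    rcases (ht.2.trans hx₀.2).lt_or_eq with htb | rfl
    · exact (hu' t ⟨ht.1, htb⟩).hasDerivWithinAt
    · exact hasDerivWithinAt_Iic_of_hasDerivAt_Ioo hF.continuous ht.1 hu hu'
  · refine ODE_solution_unique_of_mem_Icc_right (v := fun _ => F) (s := fun _ => univ)
      (fun _ _ => hF.lipschitzOnWith) (hu.mono (Icc_subset_Icc_left hx₀.1)) ?_
      (fun _ _ => trivial) continuousOn_const (fun t _ => hconst t _) (fun _ _ => trivial) rfl
    intro t ht
    rcases hx₀.1.trans ht.1 |>.lt_or_eq with hat | rfl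
    · exact (hu' t ⟨hat, ht.2⟩).hasDerivWithinAt
    · exact hasDerivWithinAt_Ici_of_hasDerivAt_Ioo hF.continuous ht.2 hu hu'

end Calculus

theorem IsOpen.eqOn_zero_of_setIntegral_eq_zero {X : Type*} [TopologicalSpace X]
    [MeasurableSpace X] [OpensMeasurableSpace X] {μ : Measure X} [μ.IsOpenPosMeasure]
    {U : Set X} (hU : IsOpen U) {f : X → ℝ} (hf : ContinuousOn f U) (hf₀ : ∀ x ∈ U, 0 ≤ f x)
    (hfi : IntegrableOn f U μ) (h : ∫ x in U, f x ∂μ = 0) : EqOn f 0 U :=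
  Measure.eqOn_open_of_ae_eq ((integral_eq_zero_iff_of_nonneg_ae
    ((ae_restrict_iff' hU.measurableSet).2 (.of_forall hf₀)) hfi).1 h) hU hf continuousOn_const

/-- The eigenvalue problem as a first-order system, after substituting `v₂ = iλ v₁`, `v₄ = iλ v₃`,
`v₆ = iλ v₅`: here `T = ∂ₓv₁ + v₃ + l v₅`, `w₃ = ∂ₓv₃` and `ψ = ∂ₓv₅ - l v₁`. -/
structure BresseSolution (ρ₁ ρ₂ k₁ k₂ k₃ l L lam : ℝ) (d : ℝ → ℝ)
    (v₁ T v₃ w₃ v₅ S ψ : ℝ → ℂ) : Prop where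
  continuousOn_v₁ : ContinuousOn v₁ (Icc 0 L)
  continuousOn_T : ContinuousOn T (Icc 0 L)
  continuousOn_v₃ : ContinuousOn v₃ (Icc 0 L)
  continuousOn_w₃ : ContinuousOn w₃ (Icc 0 L)
  continuousOn_v₅ : ContinuousOn v₅ (Icc 0 L)
  continuousOn_S : ContinuousOn S (Icc 0 L)
  continuousOn_ψ : ContinuousOn ψ (Icc 0 L)
  hasDerivAt_v₁ : ∀ x ∈ Ioo 0 L, HasDerivAt v₁ (T x - v₃ x - l * v₅ x) x
  hasDerivAt_T : ∀ x ∈ Ioo 0 L, HasDerivAt T (-(lam ^ 2 * ρ₁ * v₁ x + l * S x) / k₁) x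
  hasDerivAt_v₃ : ∀ x ∈ Ioo 0 L, HasDerivAt v₃ (w₃ x) x
  hasDerivAt_w₃ : ∀ x ∈ Ioo 0 L, HasDerivAt w₃ ((k₁ * T x - lam ^ 2 * ρ₂ * v₃ x) / k₂) x
  hasDerivAt_v₅ : ∀ x ∈ Ioo 0 L, HasDerivAt v₅ (ψ x + l * v₁ x) x
  hasDerivAt_S : ∀ x ∈ Ioo 0 L, HasDerivAt S (l * k₁ * T x - lam ^ 2 * ρ₁ * v₅ x) x
  axial : ∀ x ∈ Ioo 0 L, S x = (k₃ + Complex.I * lam * d x) * ψ x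
  left : v₁ 0 = 0 ∧ v₃ 0 = 0 ∧ v₅ 0 = 0
  right : v₁ L = 0 ∧ v₃ L = 0 ∧ v₅ L = 0

theorem bresseSolution_of_eigen {ρ₁ ρ₂ k₁ k₂ k₃ l L lam : ℝ} {d : ℝ → ℝ}
    {v₁ v₂ v₃ v₄ v₅ v₆ S : ℝ → ℂ} (hL : 0 < L) (hk₁ : k₁ ≠ 0) (hk₂ : k₂ ≠ 0)
    (hv₁ : ContDiffOn ℝ 2 v₁ (Icc 0 L)) (hv₃ : ContDiffOn ℝ 2 v₃ (Icc 0 L))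
    (hv₅ : ContDiffOn ℝ 1 v₅ (Icc 0 L)) (hS : ContDiffOn ℝ 1 S (Icc 0 L))
    (h₀ : v₁ 0 = 0 ∧ v₃ 0 = 0 ∧ v₅ 0 = 0) (h_L : v₁ L = 0 ∧ v₃ L = 0 ∧ v₅ L = 0)
    (hSdef : ∀ x ∈ Ioo 0 L,
      S x = k₃ * (deriv v₅ x - l * v₁ x) + d x * (deriv v₆ x - l * v₂ x))
    (he₁ : ∀ x ∈ Ioo 0 L, v₂ x = Complex.I * lam * v₁ x)
    (he₃ : ∀ x ∈ Ioo 0 L, v₄ x = Complex.I * lam * v₃ x)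
    (he₅ : ∀ x ∈ Ioo 0 L, v₆ x = Complex.I * lam * v₅ x)
    (he₂ : ∀ x ∈ Ioo 0 L,
      k₁ * deriv (fun y => deriv v₁ y + v₃ y + l * v₅ y) x + l * k₃ * (deriv v₅ x - l * v₁ x)
        + l * d x * (deriv v₆ x - l * v₂ x) = Complex.I * lam * ρ₁ * v₂ x)
    (he₄ : ∀ x ∈ Ioo 0 L,
      k₂ * deriv (deriv v₃) x - k₁ * (deriv v₁ x + v₃ x + l * v₅ x)
        = Complex.I * lam * ρ₂ * v₄ x)
    (he₆ : ∀ x ∈ Ioo 0 L,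
      deriv S x - l * k₁ * (deriv v₁ x + v₃ x + l * v₅ x) = Complex.I * lam * ρ₁ * v₆ x) :
    BresseSolution ρ₁ ρ₂ k₁ k₂ k₃ l L lam d v₁
      (fun x => derivWithin v₁ (Icc 0 L) x + v₃ x + l * v₅ x) v₃ (derivWithin v₃ (Icc 0 L)) v₅ S
      (fun x => derivWithin v₅ (Icc 0 L) x - l * v₁ x) := by
  have hI := uniqueDiffOn_Icc hL
  have hw₁ : ContDiffOn ℝ 1 (derivWithin v₁ (Icc 0 L)) (Icc 0 L) := hv₁.derivWithin hI le_rfl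
  have hw₃ : ContDiffOn ℝ 1 (derivWithin v₃ (Icc 0 L)) (Icc 0 L) := hv₃.derivWithin hI le_rfl
  have hT : ContDiffOn ℝ 1 (fun x => derivWithin v₁ (Icc 0 L) x + v₃ x + l * v₅ x) (Icc 0 L) :=
    (hw₁.add (hv₃.of_le (by norm_num))).add (contDiffOn_const.mul hv₅)
  have hk₁' : (k₁ : ℂ) ≠ 0 := by exact_mod_cast hk₁
  have hk₂' : (k₂ : ℂ) ≠ 0 := by exact_mod_cast hk₂
  have hd₁ {x : ℝ} (hx : x ∈ Ioo 0 L) :=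
    (derivWithin_Icc_eventuallyEq_deriv (f := v₁) hx).self_of_nhds
  have hd₅ {x : ℝ} (hx : x ∈ Ioo 0 L) :=
    (derivWithin_Icc_eventuallyEq_deriv (f := v₅) hx).self_of_nhds
  refine ⟨hv₁.continuousOn, hT.continuousOn, hv₃.continuousOn, hw₃.continuousOn, hv₅.continuousOn,
    hS.continuousOn, (hv₅.continuousOn_derivWithin hI le_rfl).sub
      (continuousOn_const.mul hv₁.continuousOn), fun x hx => ?_, fun x hx => ?_, fun x hx => ?_,
    fun x hx => ?_, fun x hx => ?_, fun x hx => ?_, fun x hx => ?_, h₀, h_L⟩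
  · exact (hv₁.hasDerivAt_derivWithin_Icc two_ne_zero hx).congr_deriv (by ring)
  · have hTg : (fun x => derivWithin v₁ (Icc 0 L) x + v₃ x + l * v₅ x) =ᶠ[𝓝 x]
        (fun y => deriv v₁ y + v₃ y + l * v₅ y) := by
      filter_upwards [derivWithin_Icc_eventuallyEq_deriv (f := v₁) hx] with y hy
      rw [hy]
    refine (hT.hasDerivAt_deriv_of_eventuallyEq one_ne_zero hx hTg).congr_deriv ?_
    rw [eq_div_iff hk₁', mul_comm]
    linear_combination he₂ x hx + l * hSdef x hx + Complex.I * lam * ρ₁ * he₁ x hx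
      + lam ^ 2 * ρ₁ * v₁ x * Complex.I_sq
  · exact hv₃.hasDerivAt_derivWithin_Icc two_ne_zero hx
  · refine (hw₃.hasDerivAt_deriv_of_eventuallyEq one_ne_zero hx
      (derivWithin_Icc_eventuallyEq_deriv hx)).congr_deriv ?_
    rw [eq_div_iff hk₂', mul_comm, hd₁ hx]
    linear_combination he₄ x hx + Complex.I * lam * ρ₂ * he₃ x hx
      + lam ^ 2 * ρ₂ * v₃ x * Complex.I_sq
  · exact (hv₅.hasDerivAt_derivWithin_Icc one_ne_zero hx).congr_deriv (by ring)
  · refine (hS.hasDerivAt_deriv_of_eventuallyEq one_ne_zero hx .rfl).congr_deriv ?_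
    rw [hd₁ hx]
    linear_combination he₆ x hx + Complex.I * lam * ρ₁ * he₅ x hx
      + lam ^ 2 * ρ₁ * v₅ x * Complex.I_sq
  · have hv₆ : deriv v₆ x = Complex.I * lam * deriv v₅ x := by
      rw [Filter.EventuallyEq.deriv_eq (f₁ := v₆) (f := fun y => Complex.I * lam * v₅ y) ?_,
        deriv_const_mul _ ((hv₅.hasDerivAt_derivWithin_Icc one_ne_zero hx).differentiableAt)]
      filter_upwards [Ioo_mem_nhds hx.1 hx.2] with y hy using he₅ y hy
    rw [hSdef x hx, hv₆, he₁ x hx, hd₅ hx]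
    ring

noncomputable def bresseEnergyDensity (ρ₁ ρ₂ k₁ k₂ lam : ℝ) (v₁ T v₃ w₃ v₅ S ψ : ℝ → ℂ)
    (x : ℝ) : ℂ :=
  k₁ * T x * conj (T x) + k₂ * w₃ x * conj (w₃ x) + S x * conj (ψ x)
    - lam ^ 2 * (ρ₁ * v₁ x * conj (v₁ x) + ρ₂ * v₃ x * conj (v₃ x) + ρ₁ * v₅ x * conj (v₅ x))

def bresseState (v₁ T v₃ w₃ v₅ S : ℝ → ℂ) (x : ℝ) : Fin 6 → ℂ :=
  ![v₁ x, T x, v₃ x, w₃ x, v₅ x, S x]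

/-- The system of `BresseSolution` in the state `(v₁, T, v₃, w₃, v₅, S)` where `S = k₃ ψ`. -/
noncomputable def bresseMatrix (ρ₁ ρ₂ k₁ k₂ k₃ l lam : ℝ) : Matrix (Fin 6) (Fin 6) ℂ :=
  !![0, 1, -1, 0, -l, 0;
     -(lam ^ 2 * ρ₁ / k₁), 0, 0, 0, 0, -(l / k₁);
     0, 0, 0, 1, 0, 0;
     0, k₁ / k₂, -(lam ^ 2 * ρ₂ / k₂), 0, 0, 0;
     l, 0, 0, 0, 0, 1 / k₃;
     0, l * k₁, 0, 0, -(lam ^ 2 * ρ₁), 0]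

theorem bresseMatrix_mulVec (ρ₁ ρ₂ k₁ k₂ k₃ l lam : ℝ) (u : Fin 6 → ℂ) :
    bresseMatrix ρ₁ ρ₂ k₁ k₂ k₃ l lam *ᵥ u =
      ![u 1 - u 2 - l * u 4, -(lam ^ 2 * ρ₁ * u 0 + l * u 5) / k₁, u 3,
        (k₁ * u 1 - lam ^ 2 * ρ₂ * u 2) / k₂, l * u 0 + u 5 / k₃,
        l * k₁ * u 1 - lam ^ 2 * ρ₁ * u 4] := by
  ext i
  fin_cases i <;> simp [bresseMatrix, Matrix.mulVec, dotProduct, Fin.sum_univ_succ] <;> ring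

namespace BresseSolution

variable {ρ₁ ρ₂ k₁ k₂ k₃ l L lam : ℝ} {d : ℝ → ℝ} {v₁ T v₃ w₃ v₅ S ψ : ℝ → ℂ}

theorem hasDerivAt_flux (h : BresseSolution ρ₁ ρ₂ k₁ k₂ k₃ l L lam d v₁ T v₃ w₃ v₅ S ψ)
    (hk₁ : k₁ ≠ 0) (hk₂ : k₂ ≠ 0) {x : ℝ} (hx : x ∈ Ioo 0 L) :
    HasDerivAt (fun y => k₁ * T y * conj (v₁ y) + k₂ * w₃ y * conj (v₃ y) + S y * conj (v₅ y))
      (bresseEnergyDensity ρ₁ ρ₂ k₁ k₂ lam v₁ T v₃ w₃ v₅ S ψ x) x := by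
  have h₁ := ((h.hasDerivAt_T x hx).const_mul (k₁ : ℂ)).mul (h.hasDerivAt_v₁ x hx).star
  have h₃ := ((h.hasDerivAt_w₃ x hx).const_mul (k₂ : ℂ)).mul (h.hasDerivAt_v₃ x hx).star
  have h₅ := (h.hasDerivAt_S x hx).mul (h.hasDerivAt_v₅ x hx).star
  have hk₁' : (k₁ : ℂ) ≠ 0 := by exact_mod_cast hk₁
  have hk₂' : (k₂ : ℂ) ≠ 0 := by exact_mod_cast hk₂
  refine ((h₁.add h₃).add h₅).congr_deriv ?_
  simp only [bresseEnergyDensity, Complex.star_def, map_sub, map_add, map_mul, Complex.conj_ofReal]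
  field_simp
  ring

theorem integrableOn_energyDensity
    (h : BresseSolution ρ₁ ρ₂ k₁ k₂ k₃ l L lam d v₁ T v₃ w₃ v₅ S ψ) :
    IntegrableOn (bresseEnergyDensity ρ₁ ρ₂ k₁ k₂ lam v₁ T v₃ w₃ v₅ S ψ) (Ioo 0 L) := by
  refine ContinuousOn.integrableOn_Icc ?_ |>.mono_set Ioo_subset_Icc_self
  obtain ⟨_, _, _, _, _, _, _⟩ := h
  unfold bresseEnergyDensity
  fun_prop

theorem energyDensity_eq (h : BresseSolution ρ₁ ρ₂ k₁ k₂ k₃ l L lam d v₁ T v₃ w₃ v₅ S ψ)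
    {x : ℝ} (hx : x ∈ Ioo 0 L) :
    bresseEnergyDensity ρ₁ ρ₂ k₁ k₂ lam v₁ T v₃ w₃ v₅ S ψ x =
      ((k₁ * ‖T x‖ ^ 2 + k₂ * ‖w₃ x‖ ^ 2 + k₃ * ‖ψ x‖ ^ 2
        - lam ^ 2 * (ρ₁ * ‖v₁ x‖ ^ 2 + ρ₂ * ‖v₃ x‖ ^ 2 + ρ₁ * ‖v₅ x‖ ^ 2) : ℝ) : ℂ)
      + ((lam * d x * ‖ψ x‖ ^ 2 : ℝ) : ℂ) * Complex.I := by
  simp only [bresseEnergyDensity, h.axial x hx, mul_assoc, Complex.mul_conj']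
  push_cast
  ring

theorem integral_energyDensity (h : BresseSolution ρ₁ ρ₂ k₁ k₂ k₃ l L lam d v₁ T v₃ w₃ v₅ S ψ)
    (hk₁ : k₁ ≠ 0) (hk₂ : k₂ ≠ 0) (hL : 0 ≤ L) :
    ∫ x in Ioo 0 L, bresseEnergyDensity ρ₁ ρ₂ k₁ k₂ lam v₁ T v₃ w₃ v₅ S ψ x = 0 := by
  have hflux : ContinuousOn
      (fun y => k₁ * T y * conj (v₁ y) + k₂ * w₃ y * conj (v₃ y) + S y * conj (v₅ y))
      (Icc 0 L) := by
    obtain ⟨_, _, _, _, _, _⟩ := h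
    fun_prop
  rw [← integral_Ioc_eq_integral_Ioo, ← intervalIntegral.integral_of_le hL,
    intervalIntegral.integral_eq_sub_of_hasDeriv_right_of_le hL hflux
      (fun x hx => (h.hasDerivAt_flux hk₁ hk₂ hx).hasDerivWithinAt)
      ((intervalIntegrable_iff_integrableOn_Ioo_of_le hL).2 h.integrableOn_energyDensity)]
  simp [h.left, h.right]

theorem integral_strainEnergy_sub_kineticEnergy
    (h : BresseSolution ρ₁ ρ₂ k₁ k₂ k₃ l L lam d v₁ T v₃ w₃ v₅ S ψ)
    (hk₁ : k₁ ≠ 0) (hk₂ : k₂ ≠ 0) (hL : 0 ≤ L) :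
    ∫ x in Ioo 0 L, (k₁ * ‖T x‖ ^ 2 + k₂ * ‖w₃ x‖ ^ 2 + k₃ * ‖ψ x‖ ^ 2
      - lam ^ 2 * (ρ₁ * ‖v₁ x‖ ^ 2 + ρ₂ * ‖v₃ x‖ ^ 2 + ρ₁ * ‖v₅ x‖ ^ 2)) = 0 := by
  have := congrArg Complex.re (h.integral_energyDensity hk₁ hk₂ hL)
  rw [← RCLike.re_to_complex, ← integral_re h.integrableOn_energyDensity] at this
  refine Eq.trans (setIntegral_congr_fun measurableSet_Ioo fun x hx => ?_) this
  simp only [h.energyDensity_eq hx, RCLike.re_to_complex, Complex.add_re, Complex.mul_re,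
    Complex.ofReal_re, Complex.ofReal_im, Complex.I_re, Complex.I_im]
  ring

theorem ae_dissipation_eq_zero (h : BresseSolution ρ₁ ρ₂ k₁ k₂ k₃ l L lam d v₁ T v₃ w₃ v₅ S ψ)
    (hk₁ : k₁ ≠ 0) (hk₂ : k₂ ≠ 0) (hL : 0 ≤ L) (hd : ∀ x, 0 ≤ d x) :
    ∀ᵐ x ∂volume.restrict (Ioo 0 L), lam * d x * ‖ψ x‖ ^ 2 = 0 := by
  have him : EqOn (fun x => RCLike.im (bresseEnergyDensity ρ₁ ρ₂ k₁ k₂ lam v₁ T v₃ w₃ v₅ S ψ x))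
      (fun x => lam * d x * ‖ψ x‖ ^ 2) (Ioo 0 L) := fun x hx => by
    simp only [h.energyDensity_eq hx, RCLike.im_to_complex, Complex.add_im, Complex.mul_im,
      Complex.ofReal_re, Complex.ofReal_im, Complex.I_re, Complex.I_im]
    ring
  have hint : IntegrableOn (fun x => lam * d x * ‖ψ x‖ ^ 2) (Ioo 0 L) :=
    IntegrableOn.congr_fun h.integrableOn_energyDensity.im him measurableSet_Ioo
  have hzero : ∫ x in Ioo 0 L, lam * d x * ‖ψ x‖ ^ 2 = 0 := by
    rw [← setIntegral_congr_fun measurableSet_Ioo him, integral_im h.integrableOn_energyDensity,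
      h.integral_energyDensity hk₁ hk₂ hL, map_zero]
  -- multiplying by `lam` makes the integrand nonnegative
  have hsq : ∀ᵐ x ∂volume.restrict (Ioo 0 L), lam * (lam * d x * ‖ψ x‖ ^ 2) = 0 := by
    refine (integral_eq_zero_iff_of_nonneg (fun x => ?_) (hint.const_mul lam)).1 ?_
    · have := hd x
      simp only [Pi.zero_apply, ← mul_assoc, ← sq]
      positivity
    · rw [integral_const_mul, hzero, mul_zero]
  filter_upwards [hsq] with x hx
  rcases mul_eq_zero.1 hx with hlam | hx
  exacts [by simp [hlam], hx]

theorem continuousOn_state (h : BresseSolution ρ₁ ρ₂ k₁ k₂ k₃ l L lam d v₁ T v₃ w₃ v₅ S ψ) :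
    ContinuousOn (bresseState v₁ T v₃ w₃ v₅ S) (Icc 0 L) := by
  refine continuousOn_pi.2 fun i => ?_
  fin_cases i
  exacts [h.continuousOn_v₁, h.continuousOn_T, h.continuousOn_v₃, h.continuousOn_w₃,
    h.continuousOn_v₅, h.continuousOn_S]

theorem hasDerivAt_state (h : BresseSolution ρ₁ ρ₂ k₁ k₂ k₃ l L lam d v₁ T v₃ w₃ v₅ S ψ)
    (hk₃ : k₃ ≠ 0) (hS : ∀ x ∈ Ioo 0 L, S x = k₃ * ψ x) {x : ℝ} (hx : x ∈ Ioo 0 L) :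
    HasDerivAt (bresseState v₁ T v₃ w₃ v₅ S)
      (bresseMatrix ρ₁ ρ₂ k₁ k₂ k₃ l lam *ᵥ bresseState v₁ T v₃ w₃ v₅ S x) x := by
  have hψ : ψ x = S x / k₃ := by
    rw [hS x hx, mul_div_cancel_left₀ _ (by exact_mod_cast hk₃)]
  rw [bresseMatrix_mulVec, hasDerivAt_pi]
  intro i
  fin_cases i
  · exact h.hasDerivAt_v₁ x hx
  · exact h.hasDerivAt_T x hx
  · exact h.hasDerivAt_v₃ x hx
  · exact h.hasDerivAt_w₃ x hx
  · exact (h.hasDerivAt_v₅ x hx).congr_deriv (by simp [bresseState, hψ, add_comm])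
  · exact h.hasDerivAt_S x hx

/-- Where `ψ` vanishes, the equations force the state to be an equilibrium: `S = 0` gives
`l k₁ T = λ² ρ₁ v₅`, differentiating that gives `v₁ = 0`, and then `w₃ = 0`. -/
theorem mulVec_state_eq_zero_of_eqOn_ψ_zero
    (h : BresseSolution ρ₁ ρ₂ k₁ k₂ k₃ l L lam d v₁ T v₃ w₃ v₅ S ψ)
    (hlam : lam ≠ 0) (hρ₁ : ρ₁ ≠ 0) (hl : l ≠ 0) (hk₁ : k₁ ≠ 0)
    {J : Set ℝ} (hJ : IsOpen J) (hJL : J ⊆ Ioo 0 L) (hψ : EqOn ψ 0 J) {x : ℝ} (hx : x ∈ J) :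
    bresseMatrix ρ₁ ρ₂ k₁ k₂ k₃ l lam *ᵥ bresseState v₁ T v₃ w₃ v₅ S x = 0 := by
  have hderiv {f f' : ℝ → ℂ} (hf : ∀ x ∈ Ioo 0 L, HasDerivAt f (f' x) x) (h0 : EqOn f 0 J) :
      EqOn f' 0 J :=
    hJ.eqOn_zero_of_hasDerivAt_of_eqOn_zero (fun x hx => hf x (hJL hx)) h0
  have hS : EqOn S 0 J := fun x hx => by simp [h.axial x (hJL hx), hψ hx]
  have hTv₅ := hderiv h.hasDerivAt_S hS
  have hv₁ : EqOn v₁ 0 J := by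
    intro x hx
    have := hderiv (f := fun y => l * k₁ * T y - lam ^ 2 * ρ₁ * v₅ y)
      (fun x hx => ((h.hasDerivAt_T x hx).const_mul (l * k₁ : ℂ)).sub
        ((h.hasDerivAt_v₅ x hx).const_mul (lam ^ 2 * ρ₁ : ℂ))) hTv₅ hx
    simp only [hS hx, hψ hx, Pi.zero_apply] at this
    have hk₁' : (k₁ : ℂ) ≠ 0 := by exact_mod_cast hk₁
    have hc : (2 * l * lam ^ 2 * ρ₁ : ℂ) ≠ 0 := by exact_mod_cast by positivity
    have key : (2 * l * lam ^ 2 * ρ₁ : ℂ) * v₁ x = 0 := by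
      field_simp at this
      linear_combination -this
    exact (mul_eq_zero.1 key).resolve_left hc
  have hTv₃v₅ := hderiv h.hasDerivAt_v₁ hv₁
  have hw₃ : EqOn w₃ 0 J := by
    intro x hx
    have := hderiv (f := fun y => T y - v₃ y - l * v₅ y)
      (fun x hx => ((h.hasDerivAt_T x hx).sub (h.hasDerivAt_v₃ x hx)).sub
        ((h.hasDerivAt_v₅ x hx).const_mul (l : ℂ))) hTv₃v₅ hx
    simp only [hS hx, hψ hx, hv₁ hx, Pi.zero_apply] at this
    simpa using this
  have hTv₃ := hderiv h.hasDerivAt_w₃ hw₃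
  rw [bresseMatrix_mulVec]
  ext i
  fin_cases i
  · exact hTv₃v₅ hx
  · simp [bresseState, hv₁ hx, hS hx]
  · exact hw₃ hx
  · exact hTv₃ hx
  · simp [bresseState, hv₁ hx, hS hx]
  · exact hTv₅ hx

theorem state_zero_eq_zero_of_lam_eq_zero
    (h : BresseSolution ρ₁ ρ₂ k₁ k₂ k₃ l L 0 d v₁ T v₃ w₃ v₅ S ψ)
    (hk₁ : 0 < k₁) (hk₂ : 0 < k₂) (hk₃ : 0 < k₃) (hL : 0 < L) :
    bresseState v₁ T v₃ w₃ v₅ S 0 = 0 := by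
  have hE := h.integral_strainEnergy_sub_kineticEnergy hk₁.ne' hk₂.ne' hL.le
  simp only [ne_eq, OfNat.ofNat_ne_zero, not_false_eq_true, zero_pow, zero_mul, sub_zero] at hE
  have hcont : ContinuousOn (fun x => k₁ * ‖T x‖ ^ 2 + k₂ * ‖w₃ x‖ ^ 2 + k₃ * ‖ψ x‖ ^ 2)
      (Icc 0 L) := by
    obtain ⟨-, _, -, _, -, -, _⟩ := h
    fun_prop
  have hE0 := isOpen_Ioo.eqOn_zero_of_setIntegral_eq_zero (hcont.mono Ioo_subset_Icc_self)
    (fun x _ => by positivity) (hcont.integrableOn_Icc.mono_set Ioo_subset_Icc_self) hE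
  have hzero {x : ℝ} (hx : x ∈ Ioo 0 L) : T x = 0 ∧ w₃ x = 0 ∧ ψ x = 0 := by
    have := hE0 hx
    simp only [Pi.zero_apply] at this
    have : ‖T x‖ ^ 2 = 0 ∧ ‖w₃ x‖ ^ 2 = 0 ∧ ‖ψ x‖ ^ 2 = 0 := by
      refine ⟨?_, ?_, ?_⟩ <;> nlinarith [sq_nonneg ‖T x‖, sq_nonneg ‖w₃ x‖, sq_nonneg ‖ψ x‖]
    simpa using this
  have hleft {f : ℝ → ℂ} (hf : ContinuousOn f (Icc 0 L)) (h0 : EqOn f 0 (Ioo 0 L)) : f 0 = 0 :=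
    h0.of_subset_closure hf continuousOn_const Ioo_subset_Icc_self (closure_Ioo hL.ne).ge
      (left_mem_Icc.2 hL.le)
  have hT : T 0 = 0 := hleft h.continuousOn_T fun x hx => (hzero hx).1
  have hw₃ : w₃ 0 = 0 := hleft h.continuousOn_w₃ fun x hx => (hzero hx).2.1
  have hS : S 0 = 0 := hleft h.continuousOn_S fun x hx => by simp [h.axial x hx, (hzero hx).2.2]
  obtain ⟨hv₁, hv₃, hv₅⟩ := h.left
  ext i
  fin_cases i <;> simp [bresseState, hv₁, hv₃, hv₅, hT, hw₃, hS]

theorem lam_mul_ψ_eq_zero_of_damping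
    (h : BresseSolution ρ₁ ρ₂ k₁ k₂ k₃ l L lam d v₁ T v₃ w₃ v₅ S ψ)
    (hk₁ : k₁ ≠ 0) (hk₂ : k₂ ≠ 0) (hL : 0 ≤ L) {α β d₀ : ℝ} (hd₀ : 0 < d₀) (hα : 0 ≤ α)
    (hβL : β ≤ L)
    (hd : ∀ x, d x = if α < x ∧ x < β then d₀ else 0) :
    ∀ x ∈ Ioo α β, lam * ψ x = 0 := by
  have hαβL : Ioo α β ⊆ Ioo 0 L := Ioo_subset_Ioo hα hβL
  have hdiss := ae_restrict_of_ae_restrict_of_subset hαβL <| h.ae_dissipation_eq_zero hk₁ hk₂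
    hL (fun x => by rw [hd]; split_ifs <;> simp [hd₀.le])
  have hdiss' : EqOn (fun x => lam * d₀ * ‖ψ x‖ ^ 2) 0 (Ioo α β) := by
    refine Measure.eqOn_open_of_ae_eq (μ := volume) ?_ isOpen_Ioo ?_ continuousOn_const
    · filter_upwards [hdiss, ae_restrict_mem measurableSet_Ioo] with x hx hxJ
      rwa [hd, if_pos (mem_Ioo.1 hxJ)] at hx
    · have := h.continuousOn_ψ.mono (hαβL.trans Ioo_subset_Icc_self)
      fun_prop
  intro x hx
  simpa [hd₀.ne'] using hdiss' hx

theorem eq_zero (h : BresseSolution ρ₁ ρ₂ k₁ k₂ k₃ l L lam d v₁ T v₃ w₃ v₅ S ψ)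
    (hρ₁ : ρ₁ ≠ 0) (hk₁ : 0 < k₁) (hk₂ : 0 < k₂) (hk₃ : 0 < k₃) (hl : l ≠ 0) (hL : 0 < L)
    {α β d₀ : ℝ} (hd₀ : 0 < d₀) (hα : 0 ≤ α) (hαβ : α < β) (hβL : β ≤ L)
    (hd : ∀ x, d x = if α < x ∧ x < β then d₀ else 0) :
    ∀ x ∈ Icc 0 L, v₁ x = 0 ∧ v₃ x = 0 ∧ v₅ x = 0 := by
  have hψ := h.lam_mul_ψ_eq_zero_of_damping hk₁.ne' hk₂.ne' hL.le hd₀ hα hβL hd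
  have hS (x : ℝ) (hx : x ∈ Ioo 0 L) : S x = k₃ * ψ x := by
    rw [h.axial x hx]
    by_cases hxJ : α < x ∧ x < β
    · linear_combination (Complex.I * d x) * hψ x hxJ
    · simp [hd, hxJ]
  obtain ⟨x₀, hx₀, heq⟩ : ∃ x₀ ∈ Icc 0 L,
      bresseMatrix ρ₁ ρ₂ k₁ k₂ k₃ l lam *ᵥ bresseState v₁ T v₃ w₃ v₅ S x₀ = 0 := by
    by_cases hlam : lam = 0
    · subst hlam
      refine ⟨0, left_mem_Icc.2 hL.le, ?_⟩
      rw [h.state_zero_eq_zero_of_lam_eq_zero hk₁ hk₂ hk₃ hL, mulVec_zero]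
    · have hmid : (α + β) / 2 ∈ Ioo α β := ⟨by linarith, by linarith⟩
      exact ⟨_, Ioo_subset_Icc_self (Ioo_subset_Ioo hα hβL hmid),
        h.mulVec_state_eq_zero_of_eqOn_ψ_zero hlam hρ₁ hl hk₁.ne' isOpen_Ioo
          (Ioo_subset_Ioo hα hβL) (fun x hx => by simpa [hlam] using hψ x hx) hmid⟩
  have hconst := (toLin' (bresseMatrix ρ₁ ρ₂ k₁ k₂ k₃ l lam)).toContinuousLinearMap.lipschitz
    |>.eqOn_const_of_hasDerivAt h.continuousOn_state
      (fun x hx => h.hasDerivAt_state hk₃.ne' hS hx) hx₀ heq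
  intro x hx
  have hx0 := (hconst hx).trans (hconst (left_mem_Icc.2 hL.le)).symm
  obtain ⟨h₁, h₃, h₅⟩ := h.left
  exact ⟨(congrFun hx0 0).trans h₁, (congrFun hx0 2).trans h₃, (congrFun hx0 4).trans h₅⟩

end BresseSolution

theorem bresse_ker_trivial_general
    (ρ₁ ρ₂ k₁ k₂ k₃ l L d₀ α β : ℝ)
    (hρ₁ : 0 < ρ₁) (hk₁ : 0 < k₁) (hk₂ : 0 < k₂) (hk₃ : 0 < k₃)
    (hl : 0 < l) (hL : 0 < L) (hd₀ : 0 < d₀)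
    (hα : 0 < α) (hαβ : α < β) (hβL : β < L)
    (d : ℝ → ℝ) (hd : ∀ x, d x = if α < x ∧ x < β then d₀ else 0)
    (lam : ℝ)
    (v1 v2 v3 v4 v5 v6 : ℝ → ℂ)
    (hv1 : ContDiffOn ℝ 2 v1 (Set.Icc 0 L)) (hv3 : ContDiffOn ℝ 2 v3 (Set.Icc 0 L))
    (hv5 : ContDiffOn ℝ 1 v5 (Set.Icc 0 L))
    (hbc : v1 0 = 0 ∧ v1 L = 0 ∧ v2 0 = 0 ∧ v2 L = 0 ∧ v3 0 = 0 ∧ v3 L = 0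
      ∧ v4 0 = 0 ∧ v4 L = 0 ∧ v5 0 = 0 ∧ v5 L = 0 ∧ v6 0 = 0 ∧ v6 L = 0)
    (S : ℝ → ℂ) (hS : ContDiffOn ℝ 1 S (Set.Icc 0 L))
    (hSdef : ∀ x ∈ Set.Icc (0:ℝ) L,
      S x = (k₃ : ℂ) * (deriv v5 x - (l : ℂ) * v1 x)
        + (d x : ℂ) * (deriv v6 x - (l : ℂ) * v2 x))
    (he1 : ∀ x ∈ Set.Ioo (0:ℝ) L, v2 x = Complex.I * (lam : ℂ) * v1 x)
    (he3 : ∀ x ∈ Set.Ioo (0:ℝ) L, v4 x = Complex.I * (lam : ℂ) * v3 x)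
    (he5 : ∀ x ∈ Set.Ioo (0:ℝ) L, v6 x = Complex.I * (lam : ℂ) * v5 x)
    (he2 : ∀ x ∈ Set.Ioo (0:ℝ) L,
      (k₁ : ℂ) * deriv (fun y => deriv v1 y + v3 y + (l : ℂ) * v5 y) x
        + (l : ℂ) * (k₃ : ℂ) * (deriv v5 x - (l : ℂ) * v1 x)
        + (l : ℂ) * (d x : ℂ) * (deriv v6 x - (l : ℂ) * v2 x)
      = Complex.I * (lam : ℂ) * (ρ₁ : ℂ) * v2 x)
    (he4 : ∀ x ∈ Set.Ioo (0:ℝ) L,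
      (k₂ : ℂ) * deriv (deriv v3) x
        - (k₁ : ℂ) * (deriv v1 x + v3 x + (l : ℂ) * v5 x)
      = Complex.I * (lam : ℂ) * (ρ₂ : ℂ) * v4 x)
    (he6 : ∀ x ∈ Set.Ioo (0:ℝ) L,
      deriv S x - (l : ℂ) * (k₁ : ℂ) * (deriv v1 x + v3 x + (l : ℂ) * v5 x)
      = Complex.I * (lam : ℂ) * (ρ₁ : ℂ) * v6 x) :
    ∀ x ∈ Set.Icc (0:ℝ) L,
      v1 x = 0 ∧ v2 x = 0 ∧ v3 x = 0 ∧ v4 x = 0 ∧ v5 x = 0 ∧ v6 x = 0 := by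
  obtain ⟨h10, h1L, h20, h2L, h30, h3L, h40, h4L, h50, h5L, h60, h6L⟩ := hbc
  have hsol := bresseSolution_of_eigen hL hk₁.ne' hk₂.ne' hv1 hv3 hv5 hS ⟨h10, h30, h50⟩
    ⟨h1L, h3L, h5L⟩ (fun x hx => hSdef x (Ioo_subset_Icc_self hx)) he1 he3 he5 he2 he4 he6
  have h135 := hsol.eq_zero hρ₁.ne' hk₁ hk₂ hk₃ hl.ne' hL hd₀ hα.le hαβ hβL.le hd
  intro x hx
  obtain ⟨h1, h3, h5⟩ := h135 x hx
  have hvel {v w : ℝ → ℂ} (hvw : ∀ x ∈ Ioo 0 L, v x = Complex.I * lam * w x) (h0 : v 0 = 0)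
      (hL : v L = 0) (hw : w x = 0) : v x = 0 := by
    rcases eq_endpoints_or_mem_Ioo_of_mem_Icc hx with rfl | rfl | hx'
    exacts [h0, hL, by rw [hvw x hx', hw, mul_zero]]
  exact ⟨h1, hvel he1 h20 h2L h1, h3, hvel he3 h40 h4L h3, h5, hvel he5 h60 h6L h5⟩

theorem bresse_ker_trivial
    (ρ₁ ρ₂ k₁ k₂ k₃ l L d₀ α β : ℝ)
    (hρ₁ : 0 < ρ₁) (hρ₂ : 0 < ρ₂) (hk₁ : 0 < k₁) (hk₂ : 0 < k₂) (hk₃ : 0 < k₃)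
    (hl : 0 < l) (hL : 0 < L) (hd₀ : 0 < d₀)
    (hα : 0 < α) (hαβ : α < β) (hβL : β < L)
    (d : ℝ → ℝ) (hd : ∀ x, d x = if α < x ∧ x < β then d₀ else 0)
    (lam : ℝ)
    (v1 v2 v3 v4 v5 v6 : ℝ → ℂ)
    (hv1 : ContDiffOn ℝ 2 v1 (Set.Icc 0 L)) (hv3 : ContDiffOn ℝ 2 v3 (Set.Icc 0 L))
    (hv2 : ContDiffOn ℝ 1 v2 (Set.Icc 0 L)) (hv4 : ContDiffOn ℝ 1 v4 (Set.Icc 0 L))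
    (hv5 : ContDiffOn ℝ 1 v5 (Set.Icc 0 L)) (hv6 : ContDiffOn ℝ 1 v6 (Set.Icc 0 L))
    (hbc : v1 0 = 0 ∧ v1 L = 0 ∧ v2 0 = 0 ∧ v2 L = 0 ∧ v3 0 = 0 ∧ v3 L = 0
      ∧ v4 0 = 0 ∧ v4 L = 0 ∧ v5 0 = 0 ∧ v5 L = 0 ∧ v6 0 = 0 ∧ v6 L = 0)
    (S : ℝ → ℂ) (hS : ContDiffOn ℝ 1 S (Set.Icc 0 L))
    (hSdef : ∀ x ∈ Set.Icc (0:ℝ) L,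
      S x = (k₃ : ℂ) * (deriv v5 x - (l : ℂ) * v1 x)
        + (d x : ℂ) * (deriv v6 x - (l : ℂ) * v2 x))
    (he1 : ∀ x ∈ Set.Ioo (0:ℝ) L, v2 x = Complex.I * (lam : ℂ) * v1 x)
    (he3 : ∀ x ∈ Set.Ioo (0:ℝ) L, v4 x = Complex.I * (lam : ℂ) * v3 x)
    (he5 : ∀ x ∈ Set.Ioo (0:ℝ) L, v6 x = Complex.I * (lam : ℂ) * v5 x)
    (he2 : ∀ x ∈ Set.Ioo (0:ℝ) L,
      (k₁ : ℂ) * deriv (fun y => deriv v1 y + v3 y + (l : ℂ) * v5 y) x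
        + (l : ℂ) * (k₃ : ℂ) * (deriv v5 x - (l : ℂ) * v1 x)
        + (l : ℂ) * (d x : ℂ) * (deriv v6 x - (l : ℂ) * v2 x)
      = Complex.I * (lam : ℂ) * (ρ₁ : ℂ) * v2 x)
    (he4 : ∀ x ∈ Set.Ioo (0:ℝ) L,
      (k₂ : ℂ) * deriv (deriv v3) x
        - (k₁ : ℂ) * (deriv v1 x + v3 x + (l : ℂ) * v5 x)
      = Complex.I * (lam : ℂ) * (ρ₂ : ℂ) * v4 x)
    (he6 : ∀ x ∈ Set.Ioo (0:ℝ) L,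
      deriv S x - (l : ℂ) * (k₁ : ℂ) * (deriv v1 x + v3 x + (l : ℂ) * v5 x)
      = Complex.I * (lam : ℂ) * (ρ₁ : ℂ) * v6 x) :
    ∀ x ∈ Set.Icc (0:ℝ) L,
      v1 x = 0 ∧ v2 x = 0 ∧ v3 x = 0 ∧ v4 x = 0 ∧ v5 x = 0 ∧ v6 x = 0 :=
  bresse_ker_trivial_general ρ₁ ρ₂ k₁ k₂ k₃ l L d₀ α β hρ₁ hk₁ hk₂ hk₃ hl hL hd₀ hα hαβ hβL d hd lam
    v1 v2 v3 v4 v5 v6 hv1 hv3 hv5 hbc S hS hSdef he1 he3 he5 he2 he4 he6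
end

section
/- Let λ ∈ ℝ with λ ≠ 0. Suppose v¹, v³, v⁵ : (α,β) → ℂ are C² and satisfy on (α,β): ∂ₓv⁵ − l·v¹ = 0, ρ₁λ²v¹ + k₁·∂ₓ(∂ₓv¹ + v³ + l·v⁵) = 0, ρ₂λ²v³ + k₂·∂ₓ²v³ − k₁(∂ₓv¹ + v³ + l·v⁵) = 0, and ρ₁λ²v⁵ − l·k₁(∂ₓv¹ + v³ + l·v⁵) = 0. Then ∂ₓv⁵ = 0, v¹ = 0 and ∂ₓv³ = 0 everywhere on (α,β). -/
theorem bresse_local_vanishing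
    (ρ₁ ρ₂ k₁ k₂ k₃ l α β : ℝ)
    (hρ₁ : 0 < ρ₁) (hρ₂ : 0 < ρ₂) (hk₁ : 0 < k₁) (hk₂ : 0 < k₂) (hk₃ : 0 < k₃)
    (hl : 0 < l) (hαβ : α < β)
    (lam : ℝ) (hlam : lam ≠ 0)
    (v1 v3 v5 : ℝ → ℂ)
    (hv1 : ContDiffOn ℝ 2 v1 (Set.Ioo α β))
    (hv3 : ContDiffOn ℝ 2 v3 (Set.Ioo α β))
    (hv5 : ContDiffOn ℝ 2 v5 (Set.Ioo α β))
    (h0 : ∀ x ∈ Set.Ioo α β, deriv v5 x - (l : ℂ) * v1 x = 0)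
    (h1 : ∀ x ∈ Set.Ioo α β,
      (ρ₁ : ℂ) * (lam : ℂ) ^ 2 * v1 x
        + (k₁ : ℂ) * deriv (fun y => deriv v1 y + v3 y + (l : ℂ) * v5 y) x = 0)
    (h2 : ∀ x ∈ Set.Ioo α β,
      (ρ₂ : ℂ) * (lam : ℂ) ^ 2 * v3 x + (k₂ : ℂ) * deriv (deriv v3) x
        - (k₁ : ℂ) * (deriv v1 x + v3 x + (l : ℂ) * v5 x) = 0)
    (h3 : ∀ x ∈ Set.Ioo α β,
      (ρ₁ : ℂ) * (lam : ℂ) ^ 2 * v5 x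
        - (l : ℂ) * (k₁ : ℂ) * (deriv v1 x + v3 x + (l : ℂ) * v5 x) = 0) :
    ∀ x ∈ Set.Ioo α β, deriv v5 x = 0 ∧ v1 x = 0 ∧ deriv v3 x = 0 := by
  have hlC : (l : ℂ) ≠ 0 := by exact_mod_cast hl.ne'
  have hk₁C : (k₁ : ℂ) ≠ 0 := by exact_mod_cast hk₁.ne'
  have hρ₁C : (ρ₁ : ℂ) ≠ 0 := by exact_mod_cast hρ₁.ne'
  have hlamC : (lam : ℂ) ≠ 0 := by exact_mod_cast hlam
  obtain ⟨c, hc⟩ : ∃ c : ℂ, c = (ρ₁ : ℂ) * (lam : ℂ) ^ 2 / ((l : ℂ) * (k₁ : ℂ)) :=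
    ⟨_, rfl⟩
  have hccl : (k₁ : ℂ) * (c * (l : ℂ)) = (ρ₁ : ℂ) * (lam : ℂ) ^ 2 := by
    rw [hc]; field_simp
  -- Step A: S = c * v5 on the interval
  have hS : ∀ x ∈ Set.Ioo α β,
      deriv v1 x + v3 x + (l : ℂ) * v5 x = c * v5 x := by
    intro x hx
    have h := h3 x hx
    rw [sub_eq_zero] at h
    rw [hc]
    field_simp
    linear_combination (-1 : ℂ) * h
  have hdv5 : ∀ x ∈ Set.Ioo α β, deriv v5 x = (l : ℂ) * v1 x := by
    intro x hx
    have h := h0 x hx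
    linear_combination h
  -- Step B: v1 = 0 on the interval
  have hv1z : ∀ x ∈ Set.Ioo α β, v1 x = 0 := by
    intro x hx
    have hmem : Set.Ioo α β ∈ nhds x := isOpen_Ioo.mem_nhds hx
    have heq : (fun y => deriv v1 y + v3 y + (l : ℂ) * v5 y)
        =ᶠ[nhds x] (fun y => c * v5 y) :=
      Filter.eventuallyEq_of_mem hmem hS
    have hd : deriv (fun y => deriv v1 y + v3 y + (l : ℂ) * v5 y) x
        = c * deriv v5 x := by
      rw [heq.deriv_eq, deriv_const_mul_field]
    have h := h1 x hx
    rw [hd, hdv5 x hx] at h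
    have h2' : (2 : ℂ) * ((ρ₁ : ℂ) * (lam : ℂ) ^ 2) * v1 x = 0 := by
      linear_combination h - v1 x * hccl
    have hne : (2 : ℂ) * ((ρ₁ : ℂ) * (lam : ℂ) ^ 2) ≠ 0 := by
      simp [hρ₁C, hlamC]
    exact (mul_eq_zero.mp h2').resolve_left hne
  intro x hx
  have hmem : Set.Ioo α β ∈ nhds x := isOpen_Ioo.mem_nhds hx
  have hd5 : deriv v5 x = 0 := by
    rw [hdv5 x hx, hv1z x hx, mul_zero]
  refine ⟨hd5, hv1z x hx, ?_⟩
  -- deriv v1 x = 0 since v1 vanishes near x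
  have hev1 : v1 =ᶠ[nhds x] (fun _ => (0 : ℂ)) :=
    Filter.eventuallyEq_of_mem hmem hv1z
  have hdv1 : deriv v1 x = 0 := by rw [hev1.deriv_eq, deriv_const]
  -- v3 = (c - l) * v5 on the interval
  have hv3eq : ∀ y ∈ Set.Ioo α β, v3 y = (c - (l : ℂ)) * v5 y := by
    intro y hy
    have hS' := hS y hy
    have hev1' : v1 =ᶠ[nhds y] (fun _ => (0 : ℂ)) :=
      Filter.eventuallyEq_of_mem (isOpen_Ioo.mem_nhds hy) hv1z
    have : deriv v1 y = 0 := by rw [hev1'.deriv_eq, deriv_const]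
    rw [this] at hS'
    linear_combination hS'
  have hev3 : v3 =ᶠ[nhds x] (fun y => (c - (l : ℂ)) * v5 y) :=
    Filter.eventuallyEq_of_mem hmem hv3eq
  rw [hev3.deriv_eq, deriv_const_mul_field, hd5, mul_zero]
end
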